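/- arXiv:2302.12404 — 5 statements merged into one kernel-verified Lean document; each statement's English description precedes it below -/
import Mathlib

section
/- For a Tychonoff space X and a directed family α of subsets of X, the topology C_α on C(X) (generated by the sets V(f,A,ε) = {g ∈ C(X) : ∀ x ∈ A, |f(x) − g(x)| < ε} for A ∈ α, ε > 0) is Hausdorff if and only if the union of α is dense in X. -/
open Set TopologicalSpace

/-- The basic set `V(f,A,ε)` of functions uniformly `ε`-close to `f` on `A`. -/
def Vset {X : Type*} [TopologicalSpace X] (f : C(X, ℝ)) (A : Set X) (ε : ℝ) : Set C(X, ℝ) :=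
  {g | ∀ x ∈ A, |f x - g x| < ε}

/-- A nonempty directed family of subsets of `X`. -/
structure DirFam (X : Type*) where
  sets : Set (Set X)
  nonempty : sets.Nonempty
  directed : ∀ A ∈ sets, ∀ B ∈ sets, ∃ E ∈ sets, A ∪ B ⊆ E

/-- The uniform topology `C_γ` on `C(X)` determined by a directed family `γ`. -/
def DirFam.top {X : Type*} [TopologicalSpace X] (γ : DirFam X) : TopologicalSpace C(X, ℝ) where
  IsOpen U := ∀ f ∈ U, ∃ A ∈ γ.sets, ∃ ε > 0, Vset f A ε ⊆ U
  isOpen_univ := by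
    intro f _
    obtain ⟨A, hA⟩ := γ.nonempty
    exact ⟨A, hA, 1, one_pos, Set.subset_univ _⟩
  isOpen_inter := by
    intro U W hU hW f hf
    obtain ⟨A, hA, ε, hε, hAU⟩ := hU f hf.1
    obtain ⟨B, hB, δ, hδ, hBW⟩ := hW f hf.2
    obtain ⟨E, hE, hsub⟩ := γ.directed A hA B hB
    refine ⟨E, hE, min ε δ, lt_min hε hδ, fun g hg => ⟨?_, ?_⟩⟩
    · exact hAU fun x hx =>
        lt_of_lt_of_le (hg x (hsub (Set.mem_union_left _ hx))) (min_le_left _ _)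
    · exact hBW fun x hx =>
        lt_of_lt_of_le (hg x (hsub (Set.mem_union_right _ hx))) (min_le_right _ _)
  isOpen_sUnion := by
    intro S hS f hf
    obtain ⟨U, hU, hfU⟩ := hf
    obtain ⟨A, hA, ε, hε, h⟩ := hS U hU f hfU
    exact ⟨A, hA, ε, hε, h.trans (Set.subset_sUnion_of_mem hU)⟩

/-- The lattice of uniform topologies on `C(X)`. -/
def UX (X : Type*) [TopologicalSpace X] : Set (TopologicalSpace C(X, ℝ)) :=
  {t | ∃ γ : DirFam X, t = γ.top}

/-- `tle s t` means the topology `s` is coarser than or equal to `t`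
(inclusion of topologies, `τ_s ⊆ τ_t`). -/
def tle {X : Type*} [TopologicalSpace X] (s t : TopologicalSpace C(X, ℝ)) : Prop :=
  ∀ U : Set C(X, ℝ), s.IsOpen U → t.IsOpen U

/-- The directed family `{∅}`, generating the indiscrete topology `C_∅`. -/
def cEmptyFam (X : Type*) : DirFam X :=
  ⟨{∅}, Set.singleton_nonempty _, by
    intro A hA B hB
    rw [Set.mem_singleton_iff] at hA hB
    exact ⟨∅, Set.mem_singleton _, by simp [hA, hB]⟩⟩

/-- The directed family `{X}`, generating the uniform-convergence topology `C_u`. -/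
def cUnivFam (X : Type*) : DirFam X :=
  ⟨{Set.univ}, Set.singleton_nonempty _, fun A _ B _ =>
    ⟨Set.univ, Set.mem_singleton _, Set.subset_univ _⟩⟩

/-- The directed family `{{x}}`. -/
def ptFam {X : Type*} (x : X) : DirFam X :=
  ⟨{{x}}, Set.singleton_nonempty _, by
    intro A hA B hB
    rw [Set.mem_singleton_iff] at hA hB
    exact ⟨{x}, Set.mem_singleton _, by simp [hA, hB]⟩⟩

/-- The directed family `{A}`. -/
def setFam {X : Type*} (A : Set X) : DirFam X :=
  ⟨{A}, Set.singleton_nonempty _, by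
    intro B hB E hE
    rw [Set.mem_singleton_iff] at hB hE
    exact ⟨A, Set.mem_singleton _, by simp [hB, hE]⟩⟩

/-- The topology `C_x`. -/
def Cpt {X : Type*} [TopologicalSpace X] (x : X) : TopologicalSpace C(X, ℝ) :=
  (ptFam x).top

/-- The topology `C_A`. -/
def CSet {X : Type*} [TopologicalSpace X] (A : Set X) : TopologicalSpace C(X, ℝ) :=
  (setFam A).top

/-- The pushforward `f*γ = {f[A] : A ∈ γ}` of a directed family along a map. -/
def DirFam.push {X Y : Type*} (f : X → Y) (γ : DirFam X) : DirFam Y :=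
  ⟨(Set.image f) '' γ.sets, γ.nonempty.image _, by
    rintro A ⟨A', hA', rfl⟩ B ⟨B', hB', rfl⟩
    obtain ⟨E, hE, h⟩ := γ.directed A' hA' B' hB'
    exact ⟨f '' E, ⟨E, hE, rfl⟩, by rw [← Set.image_union]; exact Set.image_mono h⟩⟩


/-- Auxiliary open set: functions within `ε` of `h` on `A` with a uniform margin. -/
def Wset {X : Type*} [TopologicalSpace X] (h : C(X, ℝ)) (A : Set X) (ε : ℝ) : Set C(X, ℝ) :=
  {k | ∃ δ > 0, ∀ y ∈ A, |h y - k y| ≤ ε - δ}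

lemma Wset_open {X : Type*} [TopologicalSpace X] (γ : DirFam X) (h : C(X, ℝ)) {A : Set X}
    (hA : A ∈ γ.sets) (ε : ℝ) : γ.top.IsOpen (Wset h A ε) := by
  rintro k ⟨δ, hδ, hk⟩
  refine ⟨A, hA, δ / 2, by linarith, fun m hm => ?_⟩
  refine ⟨δ / 2, by linarith, fun y hy => ?_⟩
  have h1 := hk y hy
  have h2 := hm y hy
  calc |h y - m y| ≤ |h y - k y| + |k y - m y| := abs_sub_le _ _ _
    _ ≤ ε - δ / 2 := by linarith

lemma self_mem_Wset {X : Type*} [TopologicalSpace X] (h : C(X, ℝ)) (A : Set X) {ε : ℝ}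
    (hε : 0 < ε) : h ∈ Wset h A ε :=
  ⟨ε, hε, fun y _ => by simp⟩

/-- For a Tychonoff space `X` and a directed family `γ` of subsets of `X`,
the topology `C_γ` on `C(X)` is Hausdorff iff `⋃γ` is dense in `X`. -/
theorem stmt0 {X : Type*} [TopologicalSpace X] [T2Space X] [CompletelyRegularSpace X]
    (γ : DirFam X) :
    @T2Space C(X, ℝ) γ.top ↔ Dense (⋃₀ γ.sets) := by
  constructor
  · intro ht
    by_contra hd
    have hx : ∃ x, x ∉ closure (⋃₀ γ.sets) := by
      by_contra h'
      push_neg at h'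
      exact hd (by rw [dense_iff_closure_eq]; exact Set.eq_univ_of_forall h')
    obtain ⟨x, hx⟩ := hx
    obtain ⟨φ, hφc, hφx, hφ1⟩ := CompletelyRegularSpace.completely_regular x _
      isClosed_closure hx
    set g : C(X, ℝ) := ⟨fun y => 1 - (φ y : ℝ), by fun_prop⟩ with hg
    have hgA : ∀ y ∈ ⋃₀ γ.sets, g y = 0 := by
      intro y hy
      have : φ y = 1 := hφ1 (subset_closure hy)
      simp [hg, this]
    have hne : (0 : C(X, ℝ)) ≠ g := by
      intro h
      have : g x = 0 := by rw [← h]; rfl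
      simp [hg, hφx] at this
    obtain ⟨U, V, hU, hV, h0U, hgV, hUV⟩ := @t2_separation _ γ.top ht _ _ hne
    obtain ⟨A, hA, ε, hε, hsub⟩ := hU 0 h0U
    have : g ∈ U := hsub fun y hy => by
      simp [hgA y ⟨A, hA, hy⟩, hε]
    exact (Set.disjoint_iff.mp hUV ⟨this, hgV⟩)
  · intro hd
    refine @T2Space.mk _ γ.top fun f g hfg => ?_
    obtain ⟨x, hx⟩ : ∃ x, f x ≠ g x := by
      by_contra h'
      push_neg at h'
      exact hfg (ContinuousMap.ext h')
    set c : ℝ := |f x - g x| with hc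
    have hcpos : 0 < c := abs_pos.mpr (sub_ne_zero.mpr hx)
    have hO : IsOpen {y | c / 2 < |f y - g y|} :=
      isOpen_lt continuous_const ((f.continuous.sub g.continuous).abs)
    obtain ⟨x0, hx0O, hx0U⟩ := hd.inter_open_nonempty _ hO ⟨x, by simp; linarith⟩
    obtain ⟨A, hA, hx0A⟩ := hx0U
    refine ⟨Wset f A (c / 4), Wset g A (c / 4), Wset_open γ f hA _, Wset_open γ g hA _,
      self_mem_Wset f A (by linarith), self_mem_Wset g A (by linarith), ?_⟩
    rw [Set.disjoint_iff]
    rintro k ⟨⟨δ1, hδ1, h1⟩, ⟨δ2, hδ2, h2⟩⟩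
    have e1 := h1 x0 hx0A
    have e2 := h2 x0 hx0A
    have : |f x0 - g x0| ≤ |f x0 - k x0| + |g x0 - k x0| := by
      have := abs_sub_le (f x0) (k x0) (g x0)
      rwa [abs_sub_comm (k x0) (g x0)] at this
    have hlt : c / 2 < |f x0 - g x0| := hx0O
    linarith
end

section
/- For a Tychonoff space X and directed families α, β of subsets of X, the family α ∧ β := {cl(A) ∩ cl(B) : A ∈ α, B ∈ β} is directed and the topology C_{α∧β} is the infimum of {C_α, C_β} in 𝒰_X. -/
open Set TopologicalSpace

lemma Vset_antitone {X : Type*} [TopologicalSpace X] (f : C(X, ℝ)) {A B : Set X} (h : A ⊆ B)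
    (ε : ℝ) : Vset f B ε ⊆ Vset f A ε :=
  fun g hg x hx => hg x (h hx)

lemma Vset_closure {X : Type*} [TopologicalSpace X] (f : C(X, ℝ)) (A : Set X) {ε : ℝ}
    (hε : 0 < ε) : Vset f A (ε / 2) ⊆ Vset f (closure A) ε := by
  intro g hg x hx
  have hS : IsClosed {x | |f x - g x| ≤ ε / 2} :=
    isClosed_le (by fun_prop) continuous_const
  have := closure_minimal (fun y hy => (hg y hy).le) hS hx
  calc |f x - g x| ≤ ε / 2 := this
    _ < ε := by linarith

lemma dominated {X : Type*} [TopologicalSpace X] [T2Space X] [CompletelyRegularSpace X]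
    {γ α : DirFam X} (h : tle γ.top α.top) :
    ∀ C ∈ γ.sets, ∃ A ∈ α.sets, C ⊆ closure A := by
  intro C hC
  set U : Set C(X, ℝ) := {g | ∃ δ > 0, ∀ x ∈ C, |g x| ≤ 1 - δ} with hUdef
  have hUopen : γ.top.IsOpen U := by
    rintro g ⟨δ, hδ, hg⟩
    refine ⟨C, hC, δ / 2, by linarith, ?_⟩
    intro g' hg'
    refine ⟨δ / 2, by linarith, fun x hx => ?_⟩
    have h1 := hg x hx
    have h2 := hg' x hx
    calc |g' x| ≤ |g x - g' x| + |g x| := by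
          have := abs_sub_abs_le_abs_sub (g' x) (g x)
          rw [abs_sub_comm (g' x) (g x)] at this
          linarith
      _ ≤ 1 - δ / 2 := by linarith
  have h0 : (0 : C(X, ℝ)) ∈ U := ⟨1, one_pos, fun x _ => by simp⟩
  obtain ⟨A, hA, ε, hε, hsub⟩ := h U hUopen 0 h0
  refine ⟨A, hA, fun x hx => ?_⟩
  by_contra hxA
  obtain ⟨f, hfc, hfx, hfK⟩ :=
    CompletelyRegularSpace.completely_regular x (closure A) isClosed_closure hxA
  set g : C(X, ℝ) := ⟨fun y => 1 - (f y : ℝ), by fun_prop⟩ with hgdef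
  have hgA : g ∈ Vset (0 : C(X, ℝ)) A ε := by
    intro y hy
    have : f y = 1 := hfK (subset_closure hy)
    simp [hgdef, this, hε]
  obtain ⟨δ, hδ, hb⟩ := hsub hgA
  have := hb x hx
  have hgx : g x = 1 := by simp [hgdef, hfx]
  rw [hgx] at this
  simp only [abs_one] at this
  linarith

/-- `α ∧ β = {cl A ∩ cl B : A ∈ α, B ∈ β}` is directed and `C_{α∧β}` is the
infimum of `{C_α, C_β}` in `𝒰_X`. -/
theorem stmt3 {X : Type*} [TopologicalSpace X] [T2Space X] [CompletelyRegularSpace X]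
    (α β : DirFam X) :
    (∀ A ∈ Set.image2 (fun A B => closure A ∩ closure B) α.sets β.sets,
        ∀ B ∈ Set.image2 (fun A B => closure A ∩ closure B) α.sets β.sets,
          ∃ E ∈ Set.image2 (fun A B => closure A ∩ closure B) α.sets β.sets, A ∪ B ⊆ E) ∧
      ∀ m : DirFam X, m.sets = Set.image2 (fun A B => closure A ∩ closure B) α.sets β.sets →
        tle m.top α.top ∧ tle m.top β.top ∧
          ∀ t ∈ UX X, tle t α.top → tle t β.top → tle t m.top := by
  constructor
  · rintro _ ⟨A₁, hA₁, B₁, hB₁, rfl⟩ _ ⟨A₂, hA₂, B₂, hB₂, rfl⟩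
    obtain ⟨A, hA, hAs⟩ := α.directed A₁ hA₁ A₂ hA₂
    obtain ⟨B, hB, hBs⟩ := β.directed B₁ hB₁ B₂ hB₂
    refine ⟨closure A ∩ closure B, Set.mem_image2_of_mem hA hB, Set.union_subset ?_ ?_⟩
    · exact Set.inter_subset_inter
        (closure_mono ((Set.subset_union_left).trans hAs))
        (closure_mono ((Set.subset_union_left).trans hBs))
    · exact Set.inter_subset_inter
        (closure_mono ((Set.subset_union_right).trans hAs))
        (closure_mono ((Set.subset_union_right).trans hBs))
  · intro m hm
    refine ⟨?_, ?_, ?_⟩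
    · intro U hU f hf
      obtain ⟨E, hE, ε, hε, hsub⟩ := hU f hf
      rw [hm] at hE
      obtain ⟨A, hA, B, hB, rfl⟩ := hE
      exact ⟨A, hA, ε / 2, by linarith,
        ((Vset_closure f A hε).trans
          (Vset_antitone f Set.inter_subset_left ε)).trans hsub⟩
    · intro U hU f hf
      obtain ⟨E, hE, ε, hε, hsub⟩ := hU f hf
      rw [hm] at hE
      obtain ⟨A, hA, B, hB, rfl⟩ := hE
      exact ⟨B, hB, ε / 2, by linarith,
        ((Vset_closure f B hε).trans
          (Vset_antitone f Set.inter_subset_right ε)).trans hsub⟩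
    · rintro t ⟨γ, rfl⟩ htα htβ
      intro U hU f hf
      obtain ⟨C, hC, ε, hε, hsub⟩ := hU f hf
      obtain ⟨A, hA, hCA⟩ := dominated htα C hC
      obtain ⟨B, hB, hCB⟩ := dominated htβ C hC
      refine ⟨closure A ∩ closure B, ?_, ε, hε,
        (Vset_antitone f (Set.subset_inter hCA hCB) ε).trans hsub⟩
      rw [hm]
      exact Set.mem_image2_of_mem hA hB
end

section
/- Let X and Y be Tychonoff spaces and f : X → Y a function. Then f is continuous if and only if the f-induced relation φ = {(C_α(X), C_{f*α}(Y)) : α directed family of subsets of X}, where f*α = {f[A] : A ∈ α}, is a well-defined order-preserving function from 𝒰_X to 𝒰_Y. -/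
open Set TopologicalSpace

lemma vset_mono_closure {X : Type*} [TopologicalSpace X] (g : C(X, ℝ)) {A B : Set X}
    (hAB : A ⊆ closure B) {ε : ℝ} (hε : 0 < ε) : Vset g B (ε/2) ⊆ Vset g A ε := by
  intro h hh x hx
  have hcl : IsClosed {y | |g y - h y| ≤ ε/2} :=
    IsClosed.preimage (Continuous.abs (g.continuous.sub h.continuous)) isClosed_Iic
  have hB : B ⊆ {y | |g y - h y| ≤ ε/2} := fun y hy => (hh y hy).le
  have h2 : |g x - h x| ≤ ε/2 := hcl.closure_subset_iff.2 hB (hAB hx)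
  linarith

lemma tle_iff {X : Type*} [TopologicalSpace X] [T2Space X] [CompletelyRegularSpace X]
    (α β : DirFam X) :
    tle α.top β.top ↔ ∀ A ∈ α.sets, ∃ B ∈ β.sets, A ⊆ closure B := by
  constructor
  · intro h A hA
    set U : Set C(X, ℝ) := {g | ∃ δ > 0, Vset g A δ ⊆ Vset 0 A 1} with hU
    have hUopen : α.top.IsOpen U := by
      intro g hg
      obtain ⟨δ, hδ, hsub⟩ := hg
      refine ⟨A, hA, δ/2, by linarith, fun g' hg' => ⟨δ/2, by linarith, fun h' hh' => ?_⟩⟩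
      refine hsub fun x hx => ?_
      calc |g x - h' x| ≤ |g x - g' x| + |g' x - h' x| := abs_sub_le _ _ _
        _ < δ/2 + δ/2 := add_lt_add (hg' x hx) (hh' x hx)
        _ = δ := by ring
    have h0 : (0 : C(X, ℝ)) ∈ U := ⟨1, one_pos, fun h hh => hh⟩
    obtain ⟨B, hB, δ, hδ, hsub⟩ := h U hUopen 0 h0
    refine ⟨B, hB, fun x hx => ?_⟩
    by_contra hxB
    obtain ⟨φ, hφc, hφx, hφB⟩ :=
      CompletelyRegularSpace.completely_regular x (closure B) isClosed_closure hxB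
    set g : C(X, ℝ) := ⟨fun y => 2 * (1 - (φ y : ℝ)), by
      apply Continuous.mul continuous_const
      exact Continuous.sub continuous_const (continuous_subtype_val.comp hφc)⟩ with hgdef
    have hgB : g ∈ Vset 0 B δ := by
      intro y hy
      have : φ y = 1 := hφB (subset_closure hy)
      simp only [hgdef, ContinuousMap.coe_mk, ContinuousMap.zero_apply, this]
      simpa using hδ
    obtain ⟨δ', hδ', hsub'⟩ := hsub hgB
    have hg1 : g ∈ Vset 0 A 1 := hsub' (fun y hy => by simpa using hδ')
    have := hg1 x hx
    simp only [hgdef, ContinuousMap.coe_mk, ContinuousMap.zero_apply, hφx] at this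
    norm_num at this
  · intro h U hU g hg
    obtain ⟨A, hA, ε, hε, hsub⟩ := hU g hg
    obtain ⟨B, hB, hAB⟩ := h A hA
    exact ⟨B, hB, ε/2, by linarith, (vset_mono_closure g hAB hε).trans hsub⟩

/-- `f : X → Y` is continuous iff the `f`-induced relation
`C_α ↦ C_{f*α}` is a well-defined order-preserving function from `𝒰_X` to `𝒰_Y`. -/
theorem stmt7 {X Y : Type*} [TopologicalSpace X] [T2Space X] [CompletelyRegularSpace X]
    [TopologicalSpace Y] [T2Space Y] [CompletelyRegularSpace Y] (f : X → Y) :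
    Continuous f ↔
      ((∀ α β : DirFam X, α.top = β.top → (α.push f).top = (β.push f).top) ∧
        ∀ α β : DirFam X, tle α.top β.top → tle (α.push f).top (β.push f).top) := by
  constructor
  · intro hf
    have key : ∀ α β : DirFam X, tle α.top β.top → tle (α.push f).top (β.push f).top := by
      intro α β h
      rw [tle_iff] at h ⊢
      rintro A' ⟨A, hA, rfl⟩
      obtain ⟨B, hB, hAB⟩ := h A hA
      exact ⟨f '' B, ⟨B, hB, rfl⟩,
        (Set.image_mono hAB).trans (image_closure_subset_closure_image hf)⟩
    refine ⟨fun α β hEq => ?_, key⟩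
    have h1 : tle α.top β.top := fun U hU => hEq ▸ hU
    have h2 : tle β.top α.top := fun U hU => hEq ▸ hU
    exact TopologicalSpace.ext_iff.2 fun U => ⟨fun h => key α β h1 U h, fun h => key β α h2 U h⟩
  · rintro ⟨-, h2⟩
    have key : ∀ A : Set X, f '' closure A ⊆ closure (f '' A) := by
      intro A
      have h : tle (setFam (closure A)).top (setFam A).top := by
        rw [tle_iff]
        rintro A' (rfl : A' = closure A)
        exact ⟨A, rfl, subset_rfl⟩
      have := (tle_iff _ _).1 (h2 _ _ h) (f '' closure A) ⟨closure A, rfl, rfl⟩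
      obtain ⟨B, hB, hsub⟩ := this
      obtain ⟨B', (rfl : B' = A), rfl⟩ := hB
      exact hsub
    rw [continuous_iff_isClosed]
    intro K hK
    rw [← closure_subset_iff_isClosed]
    intro x hx
    have : f x ∈ f '' closure (f ⁻¹' K) := Set.mem_image_of_mem f hx
    have := key _ this
    have : f x ∈ closure K := closure_mono (Set.image_preimage_subset f K) this
    rwa [hK.closure_eq] at this
end

section
/- Let X and Y be Tychonoff spaces and f : X → Y. Then f is surjective if and only if the range of the f-induced relation φ is all of 𝒰_Y. -/
open Set TopologicalSpace

/-- Topologies from directed families with equal set families are equal. -/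
lemma DirFam.top_congr {X : Type*} [TopologicalSpace X] {γ δ : DirFam X}
    (h : γ.sets = δ.sets) : γ.top = δ.top := by
  refine TopologicalSpace.ext ?_
  funext U
  show (∀ f ∈ U, ∃ A ∈ γ.sets, ∃ ε > 0, Vset f A ε ⊆ U) =
    (∀ f ∈ U, ∃ A ∈ δ.sets, ∃ ε > 0, Vset f A ε ⊆ U)
  rw [h]

/-- `f : X → Y` is surjective iff the range of the `f`-induced relation
is all of `𝒰_Y`. -/
theorem stmt9 {X Y : Type*} [TopologicalSpace X] [T2Space X] [CompletelyRegularSpace X]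
    [TopologicalSpace Y] [T2Space Y] [CompletelyRegularSpace Y] (f : X → Y) :
    Function.Surjective f ↔ ∀ t ∈ UX Y, ∃ α : DirFam X, (α.push f).top = t := by
  constructor
  · rintro hf t ⟨γ, rfl⟩
    refine ⟨⟨(Set.preimage f) '' γ.sets, γ.nonempty.image _, ?_⟩, ?_⟩
    · rintro A ⟨A', hA', rfl⟩ B ⟨B', hB', rfl⟩
      obtain ⟨E, hE, h⟩ := γ.directed A' hA' B' hB'
      exact ⟨f ⁻¹' E, ⟨E, hE, rfl⟩, by
        rw [← Set.preimage_union]; exact Set.preimage_mono h⟩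
    · refine DirFam.top_congr ?_
      show (Set.image f) '' ((Set.preimage f) '' γ.sets) = γ.sets
      rw [Set.image_image]
      calc (fun A => f '' (f ⁻¹' A)) '' γ.sets
          = id '' γ.sets := Set.image_congr fun A _ => Set.image_preimage_eq A hf
        _ = γ.sets := Set.image_id _
  · intro H y
    by_contra hy
    obtain ⟨α, hα⟩ := H (Cpt y) ⟨ptFam y, rfl⟩
    -- Step 1: every B ∈ (α.push f).sets is empty
    have hBempty : ∀ B ∈ (α.push f).sets, B = ∅ := by
      rintro B hB
      -- first show B ⊆ {y}
      have hsub : B ⊆ {y} := by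
        intro x₀ hx₀
        by_contra hxy
        -- the set U_B is open in the pushed topology
        set U : Set C(Y, ℝ) := {g | ∃ δ > 0, ∀ x ∈ B, |g x| ≤ 1 - δ} with hU
        have hopen : (α.push f).top.IsOpen U := by
          rintro g ⟨δ, hδ, hg⟩
          refine ⟨B, hB, δ / 2, by positivity, fun h hh => ⟨δ / 2, by positivity, ?_⟩⟩
          intro x hx
          have h1 := hg x hx
          have h2 := hh x hx
          have : |h x| ≤ |g x| + |g x - h x| := by
            calc |h x| = |g x - (g x - h x)| := by ring_nf
              _ ≤ |g x| + |g x - h x| := abs_sub _ _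
          linarith
        rw [hα] at hopen
        have h0U : (0 : C(Y, ℝ)) ∈ U := ⟨1/2, by norm_num, fun x _ => by norm_num⟩
        obtain ⟨A, hA, ε, hε, hVU⟩ := hopen 0 h0U
        obtain rfl : A = {y} := hA
        -- separate x₀ from y
        obtain ⟨φ, hφc, hφy, hφx⟩ := CompletelyRegularSpace.completely_regular y {x₀}
          isClosed_singleton (by simpa [Set.mem_singleton_iff] using Ne.symm hxy)
        set g : C(Y, ℝ) := ⟨fun z => 2 * (φ z : ℝ),
          (continuous_const.mul (continuous_subtype_val.comp hφc))⟩ with hg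
        have hgV : g ∈ Vset (0 : C(Y, ℝ)) {y} ε := by
          intro x hx
          rw [Set.mem_singleton_iff] at hx
          subst hx
          simp [hg, hφy, hε]
        obtain ⟨δ, hδ, hgB⟩ := hVU hgV
        have := hgB x₀ hx₀
        have hφx0 : (φ x₀ : ℝ) = 1 := by
          have := hφx (Set.mem_singleton x₀)
          simp only [Pi.one_apply] at this
          exact_mod_cast congrArg Subtype.val this
        simp only [hg, ContinuousMap.coe_mk, hφx0, mul_one] at this
        rw [abs_of_nonneg (by norm_num : (0:ℝ) ≤ 2)] at this
        linarith
      -- B ⊆ {y} but y ∉ B since y ∉ range f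
      obtain ⟨A', _, rfl⟩ := hB
      ext x
      simp only [Set.mem_empty_iff_false, iff_false]
      intro hx
      have := hsub hx
      rw [Set.mem_singleton_iff] at this
      subst this
      obtain ⟨a, _, ha⟩ := hx
      exact hy ⟨a, ha⟩
    -- Step 2: the set {g : |g y| < 1} is open in Cpt y but not in the pushed topology
    set U₁ : Set C(Y, ℝ) := {g | |g y| < 1} with hU₁
    have hopen1 : (Cpt y).IsOpen U₁ := by
      intro g hg
      refine ⟨{y}, Set.mem_singleton _, 1 - |g y|, by simpa [hU₁] using hg, fun h hh => ?_⟩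
      have := hh y (Set.mem_singleton y)
      have : |h y| ≤ |g y| + |g y - h y| := by
        calc |h y| = |g y - (g y - h y)| := by ring_nf
          _ ≤ |g y| + |g y - h y| := abs_sub _ _
      have h2 := hh y (Set.mem_singleton y)
      simp only [hU₁, Set.mem_setOf_eq]
      linarith
    rw [← hα] at hopen1
    have h0U1 : (0 : C(Y, ℝ)) ∈ U₁ := by simp [hU₁]
    obtain ⟨B, hB, ε, hε, hVU⟩ := hopen1 0 h0U1
    have hBe := hBempty B hB
    subst hBe
    have : (ContinuousMap.const Y (2:ℝ)) ∈ Vset (0 : C(Y, ℝ)) ∅ ε := fun x hx => absurd hx (by simp)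
    have := hVU this
    simp only [hU₁, Set.mem_setOf_eq, ContinuousMap.const_apply] at this
    norm_num at this
end

section
/- Let X and Y be zero-dimensional Tychonoff spaces. A function φ : 𝒰_X → 𝒰_Y is an order-isomorphism if and only if there exists a homeomorphism f : X → Y such that φ(C_α(X)) = C_{f*α}(Y) for every directed family α of subsets of X, where f*α = {f[A] : A ∈ α}. -/
open Set TopologicalSpace

section Aux

variable {X Y Z : Type*}

lemma DirFam.ext' {γ δ : DirFam Z} (h : γ.sets = δ.sets) : γ = δ := by
  cases γ; cases δ; simp_all

/-- zero-dimensionality condition -/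
def ZD (Z : Type*) [TopologicalSpace Z] : Prop :=
  ∀ x : Z, ∀ U ∈ nhds x, ∃ V : Set Z, IsClopen V ∧ x ∈ V ∧ V ⊆ U

variable [TopologicalSpace Z]

lemma tle_refl (s : TopologicalSpace C(Z, ℝ)) : tle s s := fun _ h => h

lemma tle_trans {s t u : TopologicalSpace C(Z, ℝ)} (h1 : tle s t) (h2 : tle t u) : tle s u :=
  fun U hU => h2 U (h1 U hU)

lemma tle_antisymm {s t : TopologicalSpace C(Z, ℝ)} (h1 : tle s t) (h2 : tle t s) : s = t := by
  refine TopologicalSpace.ext ?_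
  funext U
  exact propext ⟨h1 U, h2 U⟩

/-- the relation on directed families corresponding to `tle` of topologies -/
def DRel (γ δ : DirFam Z) : Prop := ∀ B ∈ γ.sets, ∃ D ∈ δ.sets, B ⊆ closure D

lemma isOpen_dtop_iff (γ : DirFam Z) (U : Set C(Z, ℝ)) :
    γ.top.IsOpen U ↔ ∀ f ∈ U, ∃ A ∈ γ.sets, ∃ ε > 0, Vset f A ε ⊆ U := Iff.rfl

lemma tle_of_rel {γ δ : DirFam Z} (h : DRel γ δ) : tle γ.top δ.top := by
  intro U hU
  rw [isOpen_dtop_iff] at hU ⊢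
  intro f hf
  obtain ⟨A, hA, ε, hε, hsub⟩ := hU f hf
  obtain ⟨D, hD, hAD⟩ := h A hA
  refine ⟨D, hD, ε / 2, by linarith, fun g hg => hsub fun x hx => ?_⟩
  have hcl : closure D ⊆ {x | |f x - g x| ≤ ε / 2} := by
    refine closure_minimal (fun z hz => le_of_lt (hg z hz)) ?_
    exact isClosed_le (Continuous.abs (f.continuous.sub g.continuous)) continuous_const
  have := hcl (hAD hx)
  simp only [Set.mem_setOf_eq] at this
  linarith

lemma rel_of_tle (hZ : ZD Z) {γ δ : DirFam Z} (h : tle γ.top δ.top) : DRel γ δ := by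
  intro B hB
  classical
  set O : Set C(Z, ℝ) := {g | ∃ r : ℝ, 0 ≤ r ∧ r < 1 ∧ ∀ x ∈ B, |g x| ≤ r} with hO
  have hOopen : γ.top.IsOpen O := by
    rw [isOpen_dtop_iff]
    rintro g ⟨r, hr0, hr1, hgr⟩
    refine ⟨B, hB, (1 - r) / 2, by linarith, fun h' hh' => ?_⟩
    refine ⟨(1 + r) / 2, by linarith, by linarith, fun x hx => ?_⟩
    have h1 := hh' x hx
    have h2 := hgr x hx
    have h3 : |h' x| - |g x| ≤ |h' x - g x| := abs_sub_abs_le_abs_sub _ _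
    have h4 : |h' x - g x| = |g x - h' x| := abs_sub_comm _ _
    linarith
  have hOδ := h O hOopen
  rw [isOpen_dtop_iff] at hOδ
  have h0 : (0 : C(Z, ℝ)) ∈ O := ⟨0, le_refl _, by norm_num, fun x _ => by simp⟩
  obtain ⟨D, hD, ε, hε, hsub⟩ := hOδ 0 h0
  refine ⟨D, hD, fun x hx => ?_⟩
  by_contra hxc
  obtain ⟨V, hV, hxV, hVsub⟩ := hZ x ((closure D)ᶜ) (isClosed_closure.isOpen_compl.mem_nhds hxc)
  set g : C(Z, ℝ) := ⟨fun z => if z ∈ V then 1 else 0, by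
    refine Continuous.if ?_ continuous_const continuous_const
    intro a ha
    rw [show {x | x ∈ V} = V from rfl, hV.frontier_eq] at ha
    exact absurd ha (Set.notMem_empty a)⟩ with hg
  have hgD : g ∈ Vset (0 : C(Z, ℝ)) D ε := by
    intro z hz
    have hzV : z ∉ V := fun hzV => hVsub hzV (subset_closure hz)
    simp [hg, hzV, hε]
  obtain ⟨r, hr0, hr1, hbr⟩ := hsub hgD
  have := hbr x hx
  have hgx : g x = 1 := by simp [hg, hxV]
  rw [hgx] at this
  simp only [abs_one] at this
  linarith

lemma tle_top_iff (hZ : ZD Z) {γ δ : DirFam Z} : tle γ.top δ.top ↔ DRel γ δ :=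
  ⟨rel_of_tle hZ, tle_of_rel⟩

lemma top_eq_top (hZ : ZD Z) {γ δ : DirFam Z} (h1 : DRel γ δ) (h2 : DRel δ γ) :
    γ.top = δ.top := tle_antisymm (tle_of_rel h1) (tle_of_rel h2)

lemma setFam_sets {Z' : Type*} (A : Set Z') : (setFam A).sets = {A} := rfl

lemma rel_set_iff {A B : Set Z} : DRel (setFam A) (setFam B) ↔ A ⊆ closure B := by
  constructor
  · intro h
    obtain ⟨D, hD, hsub⟩ := h A rfl
    rw [setFam_sets, Set.mem_singleton_iff] at hD
    rwa [hD] at hsub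
  · intro h B' hB'
    rw [setFam_sets, Set.mem_singleton_iff] at hB'
    exact ⟨B, rfl, hB' ▸ h⟩

end Aux

section Aux2

variable {Z W : Type*} [TopologicalSpace Z] [TopologicalSpace W]

/-- canonical element of `UX Z` from a directed family -/
def mkU (γ : DirFam Z) : ↥(UX Z) := ⟨γ.top, γ, rfl⟩

lemma exists_mkU (s : ↥(UX Z)) : ∃ γ : DirFam Z, s = mkU γ := by
  obtain ⟨γ, hγ⟩ := s.2
  exact ⟨γ, Subtype.ext hγ⟩

def isBotU (s : ↥(UX Z)) : Prop := ∀ t : ↥(UX Z), tle s.1 t.1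

def isAtomU (a : ↥(UX Z)) : Prop :=
  ¬ isBotU a ∧ ∀ s : ↥(UX Z), tle s.1 a.1 → isBotU s ∨ tle a.1 s.1

def dirU (S : Set ↥(UX Z)) : Prop :=
  S.Nonempty ∧ ∀ a ∈ S, ∀ b ∈ S, ∃ c ∈ S, tle a.1 c.1 ∧ tle b.1 c.1

def isLUBU (S : Set ↥(UX Z)) (u : ↥(UX Z)) : Prop :=
  (∀ s ∈ S, tle s.1 u.1) ∧ ∀ v : ↥(UX Z), (∀ s ∈ S, tle s.1 v.1) → tle u.1 v.1

def cptU (t : ↥(UX Z)) : Prop :=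
  ∀ S u, dirU S → isLUBU S u → tle t.1 u.1 → ∃ s ∈ S, tle t.1 s.1

lemma tle_setFam {A D : Set Z} {δ : DirFam Z} (hD : D ∈ δ.sets) (hAD : A ⊆ closure D) :
    tle (setFam A).top δ.top :=
  tle_of_rel fun B hB => by
    rw [setFam_sets, Set.mem_singleton_iff] at hB
    exact ⟨D, hD, hB ▸ hAD⟩

lemma isBotU_of_all_empty {γ : DirFam Z} (h : ∀ B ∈ γ.sets, B = ∅) : isBotU (mkU γ) := by
  intro t
  obtain ⟨ε, rfl⟩ := exists_mkU t
  refine tle_of_rel fun B hB => ?_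
  obtain ⟨E, hE⟩ := ε.nonempty
  exact ⟨E, hE, (h B hB) ▸ Set.empty_subset _⟩

lemma not_isBotU_singleton (hZ : ZD Z) (x : Z) : ¬ isBotU (mkU (setFam ({x} : Set Z))) := by
  intro hb
  have h1 := rel_of_tle hZ (hb (mkU (setFam (∅ : Set Z))))
  obtain ⟨D, hD, hsub⟩ := h1 {x} rfl
  rw [setFam_sets, Set.mem_singleton_iff] at hD
  subst hD
  rw [closure_empty] at hsub
  exact hsub rfl

lemma isAtomU_iff (hZ : ZD Z) [T1Space Z] {a : ↥(UX Z)} :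
    isAtomU a ↔ ∃ x : Z, a = mkU (setFam {x}) := by
  constructor
  · rintro ⟨hnb, hmin⟩
    obtain ⟨γ, rfl⟩ := exists_mkU a
    have hne : ¬ ∀ B ∈ γ.sets, B = ∅ := fun h => hnb (isBotU_of_all_empty h)
    push_neg at hne
    obtain ⟨B, hB, hBne⟩ := hne
    obtain ⟨x, hx⟩ := hBne
    have hs : tle (mkU (setFam ({x} : Set Z))).1 (mkU γ).1 :=
      tle_setFam hB (Set.singleton_subset_iff.2 (subset_closure hx))
    rcases hmin _ hs with hbot | hle
    · exact absurd hbot (not_isBotU_singleton hZ x)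
    · exact ⟨x, Subtype.ext (tle_antisymm hle hs)⟩
  · rintro ⟨x, rfl⟩
    refine ⟨not_isBotU_singleton hZ x, ?_⟩
    intro s hs
    obtain ⟨δ, rfl⟩ := exists_mkU s
    have hr := rel_of_tle hZ hs
    by_cases hc : ∀ D ∈ δ.sets, D = ∅
    · exact Or.inl (isBotU_of_all_empty hc)
    · push_neg at hc
      obtain ⟨D, hD, hDne⟩ := hc
      obtain ⟨D', hD', hsub⟩ := hr D hD
      rw [setFam_sets, Set.mem_singleton_iff] at hD'
      subst hD'
      rw [closure_singleton] at hsub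
      obtain ⟨z, hz⟩ := hDne
      have hxD : x ∈ D := by
        have : z = x := hsub hz
        rwa [this] at hz
      exact Or.inr (tle_setFam hD (Set.singleton_subset_iff.2 (subset_closure hxD)))

lemma mkU_singleton_inj (hZ : ZD Z) [T1Space Z] {x y : Z}
    (h : mkU (setFam ({x} : Set Z)) = mkU (setFam ({y} : Set Z))) : x = y := by
  have h1 : tle (setFam ({x} : Set Z)).top (setFam ({y} : Set Z)).top := by
    have := Subtype.ext_iff.1 h
    simp only [mkU] at this
    rw [this]
    exact tle_refl _
  have h2 := (rel_set_iff).1 (rel_of_tle hZ h1)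
  rw [closure_singleton] at h2
  exact h2 rfl

lemma atom_le_closed (hZ : ZD Z) {x : Z} {C : Set Z} (hC : IsClosed C) :
    tle (setFam ({x} : Set Z)).top (setFam C).top ↔ x ∈ C := by
  rw [tle_top_iff hZ, rel_set_iff, hC.closure_eq, Set.singleton_subset_iff]

lemma cptU_closed (hZ : ZD Z) (C : Set Z) : cptU (mkU (setFam C)) := by
  intro S u hdir hlub hle
  have hempty : ∀ s ∈ S, tle (setFam (∅ : Set Z)).top s.1 := by
    intro s hs
    obtain ⟨ε, rfl⟩ := exists_mkU s
    obtain ⟨E, hE⟩ := ε.nonempty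
    exact tle_setFam hE (Set.empty_subset _)
  set msets : Set (Set Z) := {A : Set Z | ∃ s ∈ S, tle (setFam A).top s.1} with hmsets
  have hdirm : ∀ A ∈ msets, ∀ B ∈ msets, ∃ E ∈ msets, A ∪ B ⊆ E := by
    rintro A ⟨sa, hsa, hta⟩ B ⟨sb, hsb, htb⟩
    obtain ⟨c, hc, hac, hbc⟩ := hdir.2 sa hsa sb hsb
    obtain ⟨γc, rfl⟩ := exists_mkU c
    obtain ⟨D1, hD1, h1⟩ := rel_of_tle hZ (tle_trans hta hac) A rfl
    obtain ⟨D2, hD2, h2⟩ := rel_of_tle hZ (tle_trans htb hbc) B rfl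
    obtain ⟨E, hE, hsubE⟩ := γc.directed D1 hD1 D2 hD2
    refine ⟨closure E, ⟨mkU γc, hc, tle_setFam hE subset_rfl⟩, Set.union_subset ?_ ?_⟩
    · exact h1.trans (closure_mono fun z hz => hsubE (Set.mem_union_left _ hz))
    · exact h2.trans (closure_mono fun z hz => hsubE (Set.mem_union_right _ hz))
  obtain ⟨s0, hs0⟩ := hdir.1
  set μ : DirFam Z := ⟨msets, ⟨∅, s0, hs0, hempty s0 hs0⟩, hdirm⟩ with hμ
  have hub : ∀ s ∈ S, tle s.1 (mkU μ).1 := by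
    intro s hs
    obtain ⟨ε, rfl⟩ := exists_mkU s
    refine tle_of_rel fun B hB => ?_
    refine ⟨B, ⟨mkU ε, hs, ?_⟩, subset_closure⟩
    exact tle_setFam hB subset_closure
  have hμtop := hlub.2 (mkU μ) hub
  have hCμ : tle (setFam C).top (mkU μ).1 := tle_trans hle hμtop
  obtain ⟨A, hA, hCA⟩ := rel_of_tle hZ hCμ C rfl
  obtain ⟨s, hs, hts⟩ := hA
  exact ⟨s, hs, tle_trans (tle_of_rel (rel_set_iff.2 hCA)) hts⟩

lemma principal_of_cptU (hZ : ZD Z) {t : ↥(UX Z)} (h : cptU t) :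
    ∃ C : Set Z, IsClosed C ∧ t = mkU (setFam C) := by
  obtain ⟨γ, rfl⟩ := exists_mkU t
  set S : Set ↥(UX Z) :=
    {s | ∃ C : Set Z, IsClosed C ∧ DRel (setFam C) γ ∧ s = mkU (setFam C)} with hS
  obtain ⟨E0, hE0⟩ := γ.nonempty
  have hdir : dirU S := by
    constructor
    · refine ⟨mkU (setFam ∅), ∅, isClosed_empty, ?_, rfl⟩
      intro B hB
      rw [setFam_sets, Set.mem_singleton_iff] at hB
      exact ⟨E0, hE0, hB ▸ Set.empty_subset _⟩
    · rintro a ⟨C1, hC1, hr1, rfl⟩ b ⟨C2, hC2, hr2, rfl⟩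
      obtain ⟨D1, hD1, h1⟩ := hr1 C1 rfl
      obtain ⟨D2, hD2, h2⟩ := hr2 C2 rfl
      obtain ⟨E, hE, hsubE⟩ := γ.directed D1 hD1 D2 hD2
      refine ⟨mkU (setFam (closure E)), ⟨closure E, isClosed_closure, ?_, rfl⟩, ?_, ?_⟩
      · intro B hB
        rw [setFam_sets, Set.mem_singleton_iff] at hB
        exact ⟨E, hE, hB ▸ subset_rfl⟩
      · exact tle_setFam rfl ((h1.trans (closure_mono fun z hz =>
          hsubE (Set.mem_union_left _ hz))).trans subset_closure)
      · exact tle_setFam rfl ((h2.trans (closure_mono fun z hz =>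
          hsubE (Set.mem_union_right _ hz))).trans subset_closure)
  have hlub : isLUBU S (mkU γ) := by
    constructor
    · rintro s ⟨C, hC, hr, rfl⟩
      exact tle_of_rel hr
    · intro v hv
      obtain ⟨δ, rfl⟩ := exists_mkU v
      refine tle_of_rel fun B hB => ?_
      have hmem : mkU (setFam (closure B)) ∈ S := by
        refine ⟨closure B, isClosed_closure, ?_, rfl⟩
        intro B' hB'
        rw [setFam_sets, Set.mem_singleton_iff] at hB'
        exact ⟨B, hB, hB' ▸ subset_rfl⟩
      obtain ⟨D, hD, hsub⟩ := rel_of_tle hZ (hv _ hmem) (closure B) rfl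
      exact ⟨D, hD, subset_closure.trans hsub⟩
  obtain ⟨s, hsS, hts⟩ := h S (mkU γ) hdir hlub (tle_refl _)
  obtain ⟨C, hC, hr, rfl⟩ := hsS
  exact ⟨C, hC, Subtype.ext (tle_antisymm hts (tle_of_rel hr))⟩

end Aux2

section Aux3

variable {Z W : Type*} [TopologicalSpace Z] [TopologicalSpace W]

lemma ord_symm (e : ↥(UX Z) ≃ ↥(UX W))
    (ord : ∀ s t : ↥(UX Z), tle s.1 t.1 ↔ tle (e s).1 (e t).1) :
    ∀ s t : ↥(UX W), tle s.1 t.1 ↔ tle (e.symm s).1 (e.symm t).1 := by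
  intro s t
  have h := (ord (e.symm s) (e.symm t)).symm
  rwa [e.apply_symm_apply, e.apply_symm_apply] at h

lemma isBotU_transfer (e : ↥(UX Z) ≃ ↥(UX W))
    (ord : ∀ s t : ↥(UX Z), tle s.1 t.1 ↔ tle (e s).1 (e t).1)
    {a : ↥(UX Z)} (h : isBotU a) : isBotU (e a) := by
  intro t
  have h1 := (ord a (e.symm t)).1 (h (e.symm t))
  rwa [e.apply_symm_apply] at h1

lemma isAtomU_transfer (e : ↥(UX Z) ≃ ↥(UX W))
    (ord : ∀ s t : ↥(UX Z), tle s.1 t.1 ↔ tle (e s).1 (e t).1)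
    {a : ↥(UX Z)} (h : isAtomU a) : isAtomU (e a) := by
  obtain ⟨h1, h2⟩ := h
  constructor
  · intro hb
    apply h1
    have h3 := isBotU_transfer e.symm (ord_symm e ord) hb
    rwa [e.symm_apply_apply] at h3
  · intro s hs
    have hs' : tle (e.symm s).1 a.1 := by
      have h3 := (ord_symm e ord s (e a)).1 hs
      rwa [e.symm_apply_apply] at h3
    rcases h2 _ hs' with hb | hle
    · left
      have h3 := isBotU_transfer e ord hb
      rwa [e.apply_symm_apply] at h3
    · right
      have h3 := (ord a (e.symm s)).1 hle
      rwa [e.apply_symm_apply] at h3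

lemma cptU_transfer (e : ↥(UX Z) ≃ ↥(UX W))
    (ord : ∀ s t : ↥(UX Z), tle s.1 t.1 ↔ tle (e s).1 (e t).1)
    {t : ↥(UX Z)} (h : cptU t) : cptU (e t) := by
  intro S' u' hdir' hlub' hle'
  have ords := ord_symm e ord
  have hdir : dirU (e.symm '' S') := by
    refine ⟨hdir'.1.image _, ?_⟩
    rintro a ⟨a', ha', rfl⟩ b ⟨b', hb', rfl⟩
    obtain ⟨c', hc', h1, h2⟩ := hdir'.2 a' ha' b' hb'
    exact ⟨e.symm c', ⟨c', hc', rfl⟩, (ords a' c').1 h1, (ords b' c').1 h2⟩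
  have hlub : isLUBU (e.symm '' S') (e.symm u') := by
    constructor
    · rintro s ⟨s', hs', rfl⟩
      exact (ords s' u').1 (hlub'.1 s' hs')
    · intro v hv
      have h1 : ∀ s' ∈ S', tle s'.1 (e v).1 := by
        intro s' hs'
        have h2 := (ord (e.symm s') v).1 (hv _ ⟨s', hs', rfl⟩)
        rwa [e.apply_symm_apply] at h2
      have h2 := hlub'.2 (e v) h1
      have h3 := (ords u' (e v)).1 h2
      rwa [e.symm_apply_apply] at h3
  have hle : tle t.1 (e.symm u').1 := by
    have h1 := (ords (e t) u').1 hle'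
    rwa [e.symm_apply_apply] at h1
  obtain ⟨s, hsS, hts⟩ := h _ (e.symm u') hdir hlub hle
  obtain ⟨s', hs', rfl⟩ := hsS
  refine ⟨s', hs', ?_⟩
  have h1 := (ord t (e.symm s')).1 hts
  rwa [e.apply_symm_apply] at h1

lemma master [T1Space Z] [T1Space W] (hZ : ZD Z) (hW : ZD W)
    (e : ↥(UX Z) ≃ ↥(UX W))
    (ord : ∀ s t : ↥(UX Z), tle s.1 t.1 ↔ tle (e s).1 (e t).1) :
    ∃ g : Z → W, (∀ x : Z, e (mkU (setFam {x})) = mkU (setFam {g x})) ∧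
      ∀ C : Set Z, IsClosed C →
        IsClosed (g '' C) ∧ e (mkU (setFam C)) = mkU (setFam (g '' C)) := by
  have ords := ord_symm e ord
  have hatom : ∀ x : Z, ∃ y : W,
      e (mkU (setFam ({x} : Set Z))) = mkU (setFam ({y} : Set W)) := by
    intro x
    have h1 : isAtomU (mkU (setFam ({x} : Set Z))) := (isAtomU_iff hZ).2 ⟨x, rfl⟩
    exact (isAtomU_iff hW).1 (isAtomU_transfer e ord h1)
  choose g hg using hatom
  refine ⟨g, hg, ?_⟩
  intro C hC
  have hcpt : cptU (e (mkU (setFam C))) := cptU_transfer e ord (cptU_closed hZ C)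
  obtain ⟨G, hG, hEG⟩ := principal_of_cptU hW hcpt
  have hGimg : G = g '' C := by
    ext y
    constructor
    · intro hy
      have hatomY : isAtomU (mkU (setFam ({y} : Set W))) := (isAtomU_iff hW).2 ⟨y, rfl⟩
      obtain ⟨x, hx⟩ := (isAtomU_iff hZ).1 (isAtomU_transfer e.symm ords hatomY)
      have hxy : g x = y := by
        have h2 : e (e.symm (mkU (setFam ({y} : Set W)))) = e (mkU (setFam ({x} : Set Z))) := by
          rw [hx]
        rw [e.apply_symm_apply, hg x] at h2
        exact (mkU_singleton_inj hW h2).symm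
      have h3 : tle (setFam ({y} : Set W)).top (setFam G).top := (atom_le_closed hW hG).2 hy
      have h4 : tle (mkU (setFam ({y} : Set W))).1 (e (mkU (setFam C))).1 := by
        rw [hEG]; exact h3
      have h5 : tle (e.symm (mkU (setFam ({y} : Set W)))).1 (mkU (setFam C)).1 := by
        have h6 := (ords _ _).1 h4
        rwa [e.symm_apply_apply] at h6
      rw [hx] at h5
      exact ⟨x, (atom_le_closed hZ hC).1 h5, hxy⟩
    · rintro ⟨x, hxC, rfl⟩
      have h1 : tle (mkU (setFam ({x} : Set Z))).1 (mkU (setFam C)).1 :=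
        (atom_le_closed hZ hC).2 hxC
      have h2 := (ord _ _).1 h1
      rw [hg x, hEG] at h2
      exact (atom_le_closed hW hG).1 h2
  rw [hGimg] at hG hEG
  exact ⟨hG, hEG⟩

end Aux3

/-- for zero-dimensional Tychonoff spaces `X`, `Y`, a map `φ : 𝒰_X → 𝒰_Y`
is an order-isomorphism iff it is the `f`-induced relation of some homeomorphism
`f : X ≃ₜ Y`. -/
theorem stmt13 {X Y : Type*} [TopologicalSpace X] [T2Space X] [CompletelyRegularSpace X]
    [TopologicalSpace Y] [T2Space Y] [CompletelyRegularSpace Y]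
    (hX : ∀ x : X, ∀ U ∈ nhds x, ∃ V : Set X, IsClopen V ∧ x ∈ V ∧ V ⊆ U)
    (hY : ∀ y : Y, ∀ U ∈ nhds y, ∃ V : Set Y, IsClopen V ∧ y ∈ V ∧ V ⊆ U)
    (φ : ↥(UX X) → ↥(UX Y)) :
    (Function.Bijective φ ∧ ∀ s t : ↥(UX X), tle s.1 t.1 ↔ tle (φ s).1 (φ t).1) ↔
      ∃ f : X ≃ₜ Y, ∀ α : DirFam X, (φ ⟨α.top, α, rfl⟩).1 = (α.push f).top := by
  constructor
  · rintro ⟨hbij, hord⟩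
    set e : ↥(UX X) ≃ ↥(UX Y) := Equiv.ofBijective φ hbij with he
    have ord : ∀ s t : ↥(UX X), tle s.1 t.1 ↔ tle (e s).1 (e t).1 := hord
    have ords := ord_symm e ord
    obtain ⟨g, hg, hgC⟩ := master hX hY e ord
    obtain ⟨g', hg', hgC'⟩ := master hY hX e.symm ords
    have hgg' : ∀ y, g (g' y) = y := by
      intro y
      have h2 := hg (g' y)
      rw [← hg' y, e.apply_symm_apply] at h2
      exact (mkU_singleton_inj hY h2).symm
    have hg'g : ∀ x, g' (g x) = x := by
      intro x
      have h2 := hg' (g x)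
      rw [← hg x, e.symm_apply_apply] at h2
      exact (mkU_singleton_inj hX h2).symm
    have hcontg : Continuous g := by
      rw [continuous_iff_isClosed]
      intro C hC
      have hpre : g ⁻¹' C = g' '' C := by
        ext z
        simp only [Set.mem_preimage, Set.mem_image]
        constructor
        · intro h; exact ⟨g z, h, hg'g z⟩
        · rintro ⟨w, hw, rfl⟩; rwa [hgg' w]
      rw [hpre]
      exact (hgC' C hC).1
    have hcontg' : Continuous g' := by
      rw [continuous_iff_isClosed]
      intro C hC
      have hpre : g' ⁻¹' C = g '' C := by
        ext z
        simp only [Set.mem_preimage, Set.mem_image]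
        constructor
        · intro h; exact ⟨g' z, h, hgg' z⟩
        · rintro ⟨w, hw, rfl⟩; rwa [hg'g w]
      rw [hpre]
      exact (hgC C hC).1
    refine ⟨⟨⟨g, g', hg'g, hgg'⟩, hcontg, hcontg'⟩, ?_⟩
    intro α
    have hφ : φ ⟨α.top, α, rfl⟩ = e (mkU α) := rfl
    obtain ⟨δ, hδ⟩ := exists_mkU (e (mkU α))
    rw [hφ, hδ]
    show δ.top = (α.push g).top
    have hrel2 : DRel (α.push g) δ := by
      rintro B' ⟨A, hA, rfl⟩
      have h1 : tle (mkU (setFam (closure A))).1 (mkU α).1 := tle_setFam hA subset_rfl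
      have h2 := (ord _ _).1 h1
      rw [(hgC (closure A) isClosed_closure).2, hδ] at h2
      obtain ⟨D, hD, hsub⟩ := rel_of_tle hY h2 (g '' closure A) rfl
      exact ⟨D, hD, (Set.image_mono (f := g) subset_closure).trans hsub⟩
    have hrel1 : DRel δ (α.push g) := by
      intro D hD
      have hCclosed : IsClosed (g' '' closure D) := (hgC' (closure D) isClosed_closure).1
      have himg : g '' (g' '' closure D) = closure D := by
        rw [Set.image_image]
        simp only [hgg', Set.image_id']
      have h1 : tle (mkU (setFam (closure D))).1 (mkU δ).1 := tle_setFam hD subset_rfl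
      rw [← hδ] at h1
      have h2 : e (mkU (setFam (g' '' closure D))) = mkU (setFam (closure D)) := by
        rw [(hgC _ hCclosed).2, himg]
      rw [← h2] at h1
      obtain ⟨A, hA, hCA⟩ := rel_of_tle hX ((ord _ _).2 h1) (g' '' closure D) rfl
      refine ⟨g '' A, ⟨A, hA, rfl⟩, ?_⟩
      have h3 : D ⊆ g '' (g' '' closure D) := by
        rw [himg]; exact subset_closure
      have h4 : g '' (g' '' closure D) ⊆ g '' closure A := Set.image_mono (f := g) hCA
      have h5 : g '' closure A ⊆ closure (g '' A) :=
        image_closure_subset_closure_image hcontg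
      exact (h3.trans h4).trans h5
    exact top_eq_top hY hrel1 hrel2
  · rintro ⟨f, hf⟩
    have key : ∀ γ : DirFam X, φ (mkU γ) = mkU (γ.push ⇑f) := by
      intro γ
      exact Subtype.ext (hf γ)
    have hpush_iff : ∀ γ δ : DirFam X,
        tle γ.top δ.top ↔ tle (γ.push ⇑f).top (δ.push ⇑f).top := by
      intro γ δ
      rw [tle_top_iff hX, tle_top_iff hY]
      constructor
      · rintro h B' ⟨A, hA, rfl⟩
        obtain ⟨D, hD, hsub⟩ := h A hA
        refine ⟨⇑f '' D, ⟨D, hD, rfl⟩, ?_⟩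
        rw [← f.image_closure]
        exact Set.image_mono hsub
      · intro h A hA
        obtain ⟨D', ⟨D, hD, rfl⟩, hsub⟩ := h (⇑f '' A) ⟨A, hA, rfl⟩
        refine ⟨D, hD, ?_⟩
        rw [← f.image_closure] at hsub
        exact (Set.image_subset_image_iff f.injective).1 hsub
    refine ⟨⟨?_, ?_⟩, ?_⟩
    · intro s t hst
      obtain ⟨γ, rfl⟩ := exists_mkU s
      obtain ⟨δ, rfl⟩ := exists_mkU t
      rw [key γ, key δ] at hst
      have h1 : (γ.push ⇑f).top = (δ.push ⇑f).top := Subtype.ext_iff.1 hst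
      apply Subtype.ext
      show γ.top = δ.top
      apply tle_antisymm
      · refine (hpush_iff γ δ).2 ?_
        rw [h1]
        exact tle_refl _
      · refine (hpush_iff δ γ).2 ?_
        rw [h1]
        exact tle_refl _
    · intro u
      obtain ⟨δ, rfl⟩ := exists_mkU u
      refine ⟨mkU (δ.push ⇑f.symm), ?_⟩
      rw [key]
      congr 1
      apply DirFam.ext'
      show (Set.image ⇑f) '' ((Set.image ⇑f.symm) '' δ.sets) = δ.sets
      rw [← Set.image_comp]
      have hcomp : (Set.image ⇑f) ∘ (Set.image ⇑f.symm) = id := by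
        funext S
        simp only [Function.comp_apply, Set.image_image, id_eq]
        simp
      rw [hcomp, Set.image_id]
    · intro s t
      obtain ⟨γ, rfl⟩ := exists_mkU s
      obtain ⟨δ, rfl⟩ := exists_mkU t
      rw [key γ, key δ]
      exact hpush_iff γ δ
end
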